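/- arXiv:1207.4270 — 3 statements merged into one kernel-verified Lean document; each statement's English description precedes it below -/
import Mathlib

section
/- If R ⊆ S1 × S2 is a refinement between two transition systems with responses T1 and T2, then the relation R' = R ∪ {(s□a, s'□a) | s R s'} is a refinement between the corresponding action-deterministic mixed transition systems RM(T1) and RM(T2). -/
/-- A transition system with responses (TSR): an initial state, a transition
relation and a response-set assignment.  (Action-determinism of the transition
relation, required by the definition of a TSR, is expressed by `TSR.Det`.) -/
structure TSR (S : Type*) (A : Type*) where
  init : S
  tr : S → A → S → Prop
  resp : S → Set A

/-- The transition relation is action-deterministic. -/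
def TSR.Det {S A : Type*} (T : TSR S A) : Prop :=
  ∀ s a s' s'', T.tr s a s' → T.tr s a s'' → s' = s''

/-- `◇(s)`: the set of actions labelling transitions out of `s`. -/
def TSR.may {S A : Type*} (T : TSR S A) (s : S) : Set A :=
  {a | ∃ s', T.tr s a s'}

/-- `R` is a refinement between the TSRs `T1` and `T2`. -/
def IsRefinement {S1 S2 A : Type*} (T1 : TSR S1 A) (T2 : TSR S2 A)
    (R : S1 → S2 → Prop) : Prop :=
  R T1.init T2.init ∧
  ∀ s1 s2, R s1 s2 →
    (T1.resp s1 ⊆ T2.resp s2) ∧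
    (∀ a s1', T1.tr s1 a s1' → a ∈ T1.resp s1 →
      ∃ s2', T2.tr s2 a s2' ∧ R s1' s2') ∧
    (∀ a s2', T2.tr s2 a s2' → ∃ s1', T1.tr s1 a s1' ∧ R s1' s2')

/-- A mixed transition system: an initial state, a must transition relation and
a may transition relation. -/
structure MixTS (S : Type*) (A : Type*) where
  init : S
  must : S → A → S → Prop
  may : S → A → S → Prop

/-- `R` is a refinement between the mixed transition systems `M1` and `M2`. -/
def IsMixRefinement {S1 S2 A : Type*} (M1 : MixTS S1 A) (M2 : MixTS S2 A)
    (R : S1 → S2 → Prop) : Prop :=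
  R M1.init M2.init ∧
  ∀ s1 s2, R s1 s2 →
    (∀ a s1', M1.must s1 a s1' → ∃ s2', M2.must s2 a s2' ∧ R s1' s2') ∧
    (∀ a s2', M2.may s2 a s2' → ∃ s1', M1.may s1 a s1' ∧ R s1' s2')

/-- The state set of `RM(T)`: the states of `T` (as `Sum.inl s`) together with
the fresh states `s□a` (as `Sum.inr (s, a)`) for `a ∈ □(s) \ ◇(s)`. -/
def RMState {S A : Type*} (T : TSR S A) : Type _ :=
  {x : S ⊕ (S × A) // ∀ s a, x = Sum.inr (s, a) → a ∈ T.resp s ∧ a ∉ T.may s}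

/-- The map `RM` sending a TSR to the corresponding action-deterministic mixed
transition system: `→□ = {(s,a,s') | a ∈ □(s) ∧ (s →a s' ∨ (s ¬→a ∧ s' = s□a))}`
and `→◇ = →`. -/
def RM {S A : Type*} (T : TSR S A) : MixTS (RMState T) A where
  init := ⟨Sum.inl T.init, by intro s a h; exact absurd h (by simp)⟩
  must := fun x a y => ∃ s, x.1 = Sum.inl s ∧ a ∈ T.resp s ∧
    ((∃ s', T.tr s a s' ∧ y.1 = Sum.inl s') ∨
      ((¬ ∃ t, T.tr s a t) ∧ y.1 = Sum.inr (s, a)))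
  may := fun x a y => ∃ s s', x.1 = Sum.inl s ∧ y.1 = Sum.inl s' ∧ T.tr s a s'

/-- The relation `R' = R ∪ {(s□a, s'□a) | s R s'}` on the states of `RM(T1)`
and `RM(T2)`. -/
def RMRel {S1 S2 A : Type*} (T1 : TSR S1 A) (T2 : TSR S2 A)
    (R : S1 → S2 → Prop) (x : RMState T1) (y : RMState T2) : Prop :=
  (∃ s s', x.1 = Sum.inl s ∧ y.1 = Sum.inl s' ∧ R s s') ∨
  (∃ s s' a, x.1 = Sum.inr (s, a) ∧ y.1 = Sum.inr (s', a) ∧ R s s')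

/-- if `R` is a refinement between the TSRs `T1` and `T2`, then
`R' = R ∪ {(s□a, s'□a) | s R s'}` is a refinement between the corresponding
action-deterministic mixed transition systems `RM(T1)` and `RM(T2)`. -/
theorem RM_preserves_refinement {S1 S2 A : Type*}
    (T1 : TSR S1 A) (T2 : TSR S2 A) (h1 : T1.Det) (h2 : T2.Det)
    (R : S1 → S2 → Prop) (hR : IsRefinement T1 T2 R) :
    IsMixRefinement (RM T1) (RM T2) (RMRel T1 T2 R) := by
  constructor
  · exact Or.inl ⟨T1.init, T2.init, rfl, rfl, hR.1⟩
  · rintro x1 x2 hx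
    constructor
    · rintro a y1 ⟨s, hs, hresp, hy⟩
      rcases hx with ⟨s', s2, hx1, hx2, hRs⟩ | ⟨s', s2, b, hx1, _, _⟩
      · rw [hs] at hx1
        obtain rfl : s = s' := Sum.inl.inj hx1
        have hresp2 : a ∈ T2.resp s2 := (hR.2 s s2 hRs).1 hresp
        rcases hy with ⟨t, htr, hy1⟩ | ⟨hno, hy1⟩
        · obtain ⟨t2, htr2, hRt⟩ := (hR.2 s s2 hRs).2.1 a t htr hresp
          refine ⟨⟨Sum.inl t2, by simp⟩, ⟨s2, hx2, hresp2, Or.inl ⟨t2, htr2, rfl⟩⟩,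
            Or.inl ⟨t, t2, hy1, rfl, hRt⟩⟩
        · have hno2 : ¬ ∃ t, T2.tr s2 a t := by
            rintro ⟨t, ht⟩
            obtain ⟨t1, ht1, _⟩ := (hR.2 s s2 hRs).2.2 a t ht
            exact hno ⟨t1, ht1⟩
          refine ⟨⟨Sum.inr (s2, a), ?_⟩, ⟨s2, hx2, hresp2, Or.inr ⟨hno2, rfl⟩⟩,
            Or.inr ⟨s, s2, a, hy1, rfl, hRs⟩⟩
          rintro u b h
          obtain ⟨rfl, rfl⟩ : s2 = u ∧ a = b := by
            have := Sum.inr.inj h; exact ⟨congrArg Prod.fst this, congrArg Prod.snd this⟩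
          exact ⟨hresp2, hno2⟩
      · rw [hs] at hx1; exact absurd hx1 (by simp)
    · rintro a y2 ⟨s2, t2, hx2, hy2, htr2⟩
      rcases hx with ⟨s, s2', hx1, hx2', hRs⟩ | ⟨s, s2', b, _, hx2', _⟩
      · rw [hx2] at hx2'
        obtain rfl : s2 = s2' := Sum.inl.inj hx2'
        obtain ⟨t1, htr1, hRt⟩ := (hR.2 s s2 hRs).2.2 a t2 htr2
        exact ⟨⟨Sum.inl t1, by simp⟩, ⟨s, t1, hx1, rfl, htr1⟩,
          Or.inl ⟨t1, t2, rfl, hy2, hRt⟩⟩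
      · rw [hx2] at hx2'; exact absurd hx2'.symm (by simp)
end

section
/- Refinement between transition systems with responses implies language inclusion: given TSRs T1 = (S1, i1, Act, □1, →1) and T2 = (S2, i2, Act, □2, →2), if there exists a refinement R ⊆ S1 × S2, then L(T2) ⊆ L(T1). -/
/-- `Exec T s w s'`: there is a finite sequence of transitions from `s` to `s'`
labelled by the word `w`. -/
inductive Exec {S A : Type*} (T : TSR S A) : S → List A → S → Prop
  | nil (s : S) : Exec T s [] s
  | cons {s : S} {a : A} {s' : S} {w : List A} {s'' : S} :
      T.tr s a s' → Exec T s' w s'' → Exec T s (a :: w) s''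

/-- The language of a TSR: the set of words labelling accepting runs, i.e.
runs from the initial state ending in a state with empty response set. -/
def Lang {S A : Type*} (T : TSR S A) : Set (List A) :=
  {w | ∃ s, Exec T T.init w s ∧ T.resp s = ∅}

/-- refinement between TSRs implies language inclusion: if there
exists a refinement `R ⊆ S1 × S2` from `T1` to `T2` then `L(T2) ⊆ L(T1)`. -/
theorem refinement_implies_language_inclusion {S1 S2 A : Type*}
    (T1 : TSR S1 A) (T2 : TSR S2 A) (h1 : T1.Det) (h2 : T2.Det)
    (h : ∃ R : S1 → S2 → Prop, IsRefinement T1 T2 R) :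
    Lang T2 ⊆ Lang T1 := by
  obtain ⟨R, hR0, hR⟩ := h
  have key : ∀ {s2 w s2'}, Exec T2 s2 w s2' → ∀ s1, R s1 s2 →
      ∃ s1', Exec T1 s1 w s1' ∧ R s1' s2' := by
    intro s2 w s2' hex
    induction hex with
    | nil s => exact fun s1 hr => ⟨s1, Exec.nil s1, hr⟩
    | cons htr _ ih =>
      intro s1 hr
      obtain ⟨t1, ht1, hrt⟩ := (hR _ _ hr).2.2 _ _ htr
      obtain ⟨s1', hex', hr'⟩ := ih t1 hrt
      exact ⟨s1', Exec.cons ht1 hex', hr'⟩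
  rintro w ⟨s, hex, hresp⟩
  obtain ⟨s1', hex', hr'⟩ := key hex T1.init hR0
  refine ⟨s1', hex', ?_⟩
  have := (hR _ _ hr').1
  rw [hresp] at this
  exact Set.subset_empty_iff.mp this
end

section
/- Language inclusion between transition systems with responses does not imply refinement: there exist TSRs T1 and T2 over the two-element action set {a, b} such that L(T1) = L(T2) = ∅ (in particular the languages are mutually included), but there is no refinement from T1 to T2 and no refinement from T2 to T1. Concretely, one may take T1 to have a single state which is initial, a single transition on action a from that state to itself, and response set {a} at that state, and T2 to be the same with b in place of a. -/
/-- The two-element action set `{a, b}`. -/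
inductive Act : Type
  | a : Act
  | b : Act

/-- The TSR with a single (initial) state, a single transition on action `a`
from that state to itself, and response set `{a}` at that state. -/
def Ta : TSR Unit Act where
  init := ()
  tr := fun _ x _ => x = Act.a
  resp := fun _ => {Act.a}

/-- The same TSR with `b` in place of `a`. -/
def Tb : TSR Unit Act where
  init := ()
  tr := fun _ x _ => x = Act.b
  resp := fun _ => {Act.b}

/-- language inclusion between TSRs does not imply refinement:
the TSRs `Ta` and `Tb` above have empty languages (in particular the languages
are mutually included), but there is no refinement from `Ta` to `Tb` and no
refinement from `Tb` to `Ta`. -/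
theorem language_inclusion_does_not_imply_refinement :
    Ta.Det ∧ Tb.Det ∧ Lang Ta = ∅ ∧ Lang Tb = ∅ ∧
    (¬ ∃ R : Unit → Unit → Prop, IsRefinement Ta Tb R) ∧
    (¬ ∃ R : Unit → Unit → Prop, IsRefinement Tb Ta R) := by
  refine ⟨?_, ?_, ?_, ?_, ?_, ?_⟩
  · intro s a s' s'' _ _; rfl
  · intro s a s' s'' _ _; rfl
  · ext w
    simp only [Lang, Set.mem_setOf_eq, Set.mem_empty_iff_false, iff_false]
    rintro ⟨s, _, h⟩
    have : Act.a ∈ (Ta.resp s) := rfl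
    rw [h] at this; exact this
  · ext w
    simp only [Lang, Set.mem_setOf_eq, Set.mem_empty_iff_false, iff_false]
    rintro ⟨s, _, h⟩
    have : Act.b ∈ (Tb.resp s) := rfl
    rw [h] at this; exact this
  · rintro ⟨R, hinit, h⟩
    have := (h () () hinit).1 (show Act.a ∈ Ta.resp () from rfl)
    exact absurd this (by simp [Tb])
  · rintro ⟨R, hinit, h⟩
    have := (h () () hinit).1 (show Act.b ∈ Tb.resp () from rfl)
    exact absurd this (by simp [Ta])
end
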